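/- arXiv:1901.05899 — 2 statements merged into one kernel-verified Lean document; each statement's English description precedes it below -/
import Mathlib

section
/- For a class 𝒞 of Hausdorff topological vector spaces that is closed under closed graphs, the continuous-inverse property (C) implies the closed-graph property (G): every linear map between members of 𝒞 is continuous if and only if its graph is closed. -/
/-- A (Hausdorff, T₀) topological vector space over ℝ, bundled. -/
structure TVS where
  carrier : Type
  [grp : AddCommGroup carrier]
  [mod : Module ℝ carrier]
  [top : TopologicalSpace carrier]
  [tadd : IsTopologicalAddGroup carrier]
  [tsmul : ContinuousSMul ℝ carrier]
  [t2 : T2Space carrier]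

attribute [instance] TVS.grp TVS.mod TVS.top TVS.tadd TVS.tsmul TVS.t2

/-- (O) Open-mapping property. -/
def PropO (C : Set TVS) : Prop :=
  ∀ E ∈ C, ∀ F ∈ C, ∀ u : E.carrier →ₗ[ℝ] F.carrier,
    Continuous u → Function.Surjective u → IsOpenMap u

/-- (C) Continuous-inverse property. -/
def PropC (C : Set TVS) : Prop :=
  ∀ E ∈ C, ∀ F ∈ C, ∀ u : E.carrier ≃ₗ[ℝ] F.carrier,
    (Continuous u ↔ Continuous u.symm)

/-- (G) Closed-graph property. -/
def PropG (C : Set TVS) : Prop :=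
  ∀ E ∈ C, ∀ F ∈ C, ∀ u : E.carrier →ₗ[ℝ] F.carrier,
    (Continuous u ↔ IsClosed {p : E.carrier × F.carrier | p.2 = u p.1})

/-- Closure under quotients with closed subspaces. -/
def ClosedUnderQuotients (C : Set TVS) : Prop :=
  ∀ E ∈ C, ∀ (N : Submodule ℝ E.carrier), ∀ _ : IsClosed (N : Set E.carrier),
    TVS.mk (E.carrier ⧸ N) ∈ C

/-- Closure under closed graphs. -/
def ClosedUnderGraphs (C : Set TVS) : Prop :=
  ∀ E ∈ C, ∀ F ∈ C, ∀ u : E.carrier →ₗ[ℝ] F.carrier,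
    IsClosed {p : E.carrier × F.carrier | p.2 = u p.1} →
    TVS.mk ↥(LinearMap.graph u) ∈ C

/-!
The graph map `x ↦ (x, u x)` is a linear bijection from `E` onto `Graph(u)` whose inverse, the
first projection, is always continuous. When `Graph(u)` is closed it lies in `𝒞`, so (C) makes
the graph map itself continuous, and `u` is its composite with the second projection.
-/

namespace LinearMap

variable {R M M₂ : Type*} [Semiring R] [AddCommMonoid M] [AddCommMonoid M₂] [Module R M]
  [Module R M₂]

def graphEquiv (u : M →ₗ[R] M₂) : M ≃ₗ[R] u.graph :=
  (LinearEquiv.ofLeftInverse (f := LinearMap.id.prod u) (g := Prod.fst) fun _ => rfl).trans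
    (LinearEquiv.ofEq _ _ u.graph_eq_range_prod.symm)

theorem graphEquiv_symm_apply (u : M →ₗ[R] M₂) (p : u.graph) :
    u.graphEquiv.symm p = (p : M × M₂).1 :=
  u.graphEquiv.symm_apply_eq.mpr <| Subtype.ext <| Prod.ext rfl ((mem_graph_iff u _).mp p.2)

variable [TopologicalSpace M] [TopologicalSpace M₂]

theorem continuous_graphEquiv_symm (u : M →ₗ[R] M₂) : Continuous u.graphEquiv.symm := by
  simpa only [funext u.graphEquiv_symm_apply] using continuous_subtype_val.fst

theorem continuous_of_continuous_graphEquiv (u : M →ₗ[R] M₂) (h : Continuous u.graphEquiv) :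
    Continuous u :=
  (continuous_subtype_val.comp h).snd

theorem isClosed_graph_of_continuous [T2Space M₂] (u : M →ₗ[R] M₂) (h : Continuous u) :
    IsClosed (u.graph : Set (M × M₂)) :=
  isClosed_eq continuous_snd (h.comp continuous_fst)

end LinearMap

/-- If 𝒞 is closed under closed graphs, then (C) implies (G). -/
theorem propC_implies_propG (C : Set TVS) (hG : ClosedUnderGraphs C)
    (hC : PropC C) : PropG C := by
  intro E hE F hF u
  refine ⟨u.isClosed_graph_of_continuous, fun hclosed => ?_⟩
  have hgraph : TVS.mk u.graph ∈ C := hG E hE F hF u hclosed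
  exact u.continuous_of_continuous_graphEquiv
    ((hC E hE _ hgraph u.graphEquiv).mpr u.continuous_graphEquiv_symm)
end

section
/- Let 𝒞 be a class of Hausdorff topological vector spaces that is closed under quotients by closed subspaces and closed under closed graphs. Then the three properties — (O) open-mapping, (C) continuous-inverse, and (G) closed-graph — are pairwise equivalent for 𝒞. -/
section Graph

variable {R M N : Type*} [Ring R] [AddCommGroup M] [AddCommGroup N] [Module R M] [Module R N]

def LinearMap.graphEquiv_s8 (u : M →ₗ[R] N) : M ≃ₗ[R] u.graph where
  toFun x := ⟨(x, u x), rfl⟩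
  invFun p := p.1.1
  map_add' x y := by ext <;> simp
  map_smul' c x := by ext <;> simp
  left_inv _ := rfl
  right_inv p := Subtype.ext (Prod.ext rfl p.2.symm)

end Graph

section Topology

variable {X Y : Type*} [TopologicalSpace X] [TopologicalSpace Y] [T2Space Y]

theorem isClosed_setOf_snd_eq_apply {f : X → Y} (hf : Continuous f) :
    IsClosed {p : X × Y | p.2 = f p.1} :=
  isClosed_eq continuous_snd (hf.comp continuous_fst)

theorem Equiv.isClosed_setOf_snd_eq_symm_apply (e : X ≃ Y) (he : Continuous e) :
    IsClosed {p : Y × X | p.2 = e.symm p.1} := by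
  convert (isClosed_setOf_snd_eq_apply he).preimage continuous_swap using 1
  ext p
  simp [e.eq_symm_apply, eq_comm]

end Topology

section Class

variable {C : Set TVS}

theorem propC_iff :
    PropC C ↔ ∀ E ∈ C, ∀ F ∈ C, ∀ u : E.carrier ≃ₗ[ℝ] F.carrier,
      Continuous u → Continuous u.symm :=
  ⟨fun hC E hE F hF u => (hC E hE F hF u).1,
    fun h E hE F hF u => ⟨h E hE F hF u, fun hu => by simpa using h F hF E hE u.symm hu⟩⟩

theorem propG_iff :
    PropG C ↔ ∀ E ∈ C, ∀ F ∈ C, ∀ u : E.carrier →ₗ[ℝ] F.carrier,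
      IsClosed {p : E.carrier × F.carrier | p.2 = u p.1} → Continuous u :=
  ⟨fun hG E hE F hF u => (hG E hE F hF u).2,
    fun h E hE F hF u => ⟨isClosed_setOf_snd_eq_apply, h E hE F hF u⟩⟩

theorem PropO.propC (hO : PropO C) : PropC C :=
  propC_iff.2 fun E hE F hF u hu =>
    u.toEquiv.continuous_symm_iff.2 (hO E hE F hF u hu u.surjective)

/-- `u` factors as its graph isomorphism, continuous by (C) because its inverse is the
restriction of `Prod.fst`, followed by `Prod.snd`. -/
theorem PropC.propG (hGr : ClosedUnderGraphs C) (hC : PropC C) : PropG C := by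
  refine propG_iff.2 fun E hE F hF u hu => ?_
  have hgraph := (hC E hE _ (hGr E hE F hF u hu) u.graphEquiv_s8).2
    (continuous_fst.comp continuous_subtype_val)
  exact continuous_snd.comp (continuous_subtype_val.comp hgraph)

/-- `u` factors as the open quotient map onto `E ⧸ ker u` followed by the induced bijection
`e`; the inverse of `e` has closed graph because `e` is continuous, so (G) makes `e` open. -/
theorem PropG.propO (hQ : ClosedUnderQuotients C) (hG : PropG C) : PropO C := by
  intro E hE F hF u hu hsurj
  let e := u.quotKerEquivOfSurjective hsurj
  have hker_closed : IsClosed (LinearMap.ker u : Set E.carrier) :=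
    ContinuousLinearMap.isClosed_ker ⟨u, hu⟩
  have he : Continuous e :=
    (Submodule.isOpenQuotientMap_mkQ _).isQuotientMap.continuous_iff.2 hu
  have he_symm : Continuous e.symm :=
    (hG F hF _ (hQ E hE _ hker_closed) e.symm.toLinearMap).2
      (e.toEquiv.isClosed_setOf_snd_eq_symm_apply he)
  exact (e.toEquiv.continuous_symm_iff.1 he_symm).comp (Submodule.isOpenMap_mkQ _)

end Class

/-- For a class closed under quotients with closed subspaces and under closed graphs,
properties (O), (C), and (G) are pairwise equivalent. -/
theorem OCG_equivalence (C : Set TVS) (hQ : ClosedUnderQuotients C)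
    (hGr : ClosedUnderGraphs C) :
    (PropO C ↔ PropC C) ∧ (PropC C ↔ PropG C) ∧ (PropO C ↔ PropG C) :=
  ⟨⟨PropO.propC, fun h => (h.propG hGr).propO hQ⟩,
    ⟨PropC.propG hGr, fun h => (h.propO hQ).propC⟩,
    ⟨fun h => h.propC.propG hGr, PropG.propO hQ⟩⟩
end
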